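/- Deligne splitting: let (W_•, F^•) be a mixed Hodge structure on a finite-dimensional real vector space V. Then there exists a unique family of complex subspaces (I^{p,q})_{(p,q) ∈ ℤ×ℤ} of V_ℂ such that: (i) V_ℂ is the internal direct sum of the I^{p,q}; (ii) for every n, (W_n)_ℂ = ⊕_{p+q ≤ n} I^{p,q}; (iii) for every p, F^p = ⊕_{r ≥ p, s ∈ ℤ} I^{r,s}; and (iv) for every (p,q), I^{p,q} ≡ σ(I^{q,p}) modulo ⊕_{r < p, s < q} I^{r,s}, i.e. the images of I^{p,q} and of σ(I^{q,p}) in the quotient of V_ℂ by the subspace ⊕_{r < p, s < q} I^{r,s} coincide. -/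

import Mathlib

/-!
The argument takes place in an arbitrary modular lattice: `W` is increasing, `F` and `G = σ F`
are decreasing, and `F`, `G` induce opposed filtrations of weight `n` on every `Gr^W_n`.
Deligne's formula for `I^{p,q}` lifts the decomposition `Gr^W_n = ⊕_{p+q=n} F^p ∩ G^q`: an element
of `F^p ∩ W_n` that is congruent to `G^q` modulo `W_{n-1}` is corrected, one weight at a time, by
elements of `F^p` until it lies in `I^{p,q}`. Ordered by weight and then by decreasing `p`, each
`I^{p,q}` is disjoint from the sum of the earlier ones, which gives independence; spanning and the
congruence `I^{p,q} ≡ σ I^{q,p}` follow by induction on the weight. Conversely, any splitting `J`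
satisfies `J^{p,q} ⊆ G^q ∩ W_{p+q} + ∑_{r<p, s<q} J^{r,s}`, so by induction `J^{p,q} ⊆ I^{p,q}`,
and an independent family cannot properly contain another family with the same sum.
-/

open scoped TensorProduct

private lemma sigmaC_aux (V : Type*) [AddCommGroup V] [Module ℝ V] (c : ℂ) (x : ℂ ⊗[ℝ] V) :
    TensorProduct.map Complex.conjAe.toLinearMap LinearMap.id (c • x) =
      (starRingEnd ℂ) c • TensorProduct.map Complex.conjAe.toLinearMap LinearMap.id x := by
  induction x using TensorProduct.induction_on with
  | zero => simp
  | tmul z v => simp [TensorProduct.smul_tmul', smul_eq_mul, map_mul]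
  | add x y hx hy => simp only [smul_add, map_add, hx, hy]

/-- The conjugation involution `σ` of the complexification `ℂ ⊗[ℝ] V`,
as a `conj`-semilinear map. -/
noncomputable def sigmaC (V : Type*) [AddCommGroup V] [Module ℝ V] :
    (ℂ ⊗[ℝ] V) →ₛₗ[starRingEnd ℂ] (ℂ ⊗[ℝ] V) where
  toFun := TensorProduct.map Complex.conjAe.toLinearMap LinearMap.id
  map_add' x y := map_add _ x y
  map_smul' c x := sigmaC_aux V c x

/-- A mixed Hodge structure on a real vector space `V`: an increasing, bounded, exhaustive
weight filtration `W` of `V` by real subspaces and a decreasing, bounded, exhaustive Hodge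
filtration `F` of `V_ℂ = ℂ ⊗[ℝ] V` by complex subspaces, such that for every `n` the
filtration induced by `F` on `Gr^W_n = W_n / W_{n-1}` is a Hodge filtration of weight `n`.

Identifying the complexification of `Gr^W_n` with `(W_n)_ℂ / (W_{n-1})_ℂ` (where
`(W_n)_ℂ := (W n).baseChange ℂ ⊆ V_ℂ`), the Hodge filtration condition of weight `n` on
`Gr^W_n` — namely `F^p(Gr^W_n)_ℂ ⊕ σ(F^{n-p+1}(Gr^W_n)_ℂ) = (Gr^W_n)_ℂ` for all `p`, where
`F^p(Gr^W_n)_ℂ` is the image of `F^p ⊓ (W_n)_ℂ` — is expressed below by pulling back along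
the quotient map `(W_n)_ℂ → (W_n)_ℂ / (W_{n-1})_ℂ`: the first displayed equation is the
disjointness of the two images in the quotient, the second their spanning of the quotient. -/
def IsMixedHodgeStructure (V : Type*) [AddCommGroup V] [Module ℝ V]
    (W : ℤ → Submodule ℝ V) (F : ℤ → Submodule ℂ (ℂ ⊗[ℝ] V)) : Prop :=
  Monotone W ∧
  (∃ a : ℤ, ∀ n ≤ a, W n = ⊥) ∧
  (∃ b : ℤ, ∀ n ≥ b, W n = ⊤) ∧
  (∀ p : ℤ, F (p + 1) ≤ F p) ∧
  (∃ a : ℤ, ∀ p ≤ a, F p = ⊤) ∧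
  (∃ b : ℤ, ∀ p ≥ b, F p = ⊥) ∧
  (∀ n p : ℤ,
    ((F p ⊓ (W n).baseChange ℂ) ⊔ (W (n - 1)).baseChange ℂ) ⊓
        (((F (n - p + 1) ⊓ (W n).baseChange ℂ).map (sigmaC V)) ⊔ (W (n - 1)).baseChange ℂ)
      = (W (n - 1)).baseChange ℂ ∧
    (F p ⊓ (W n).baseChange ℂ) ⊔ ((F (n - p + 1) ⊓ (W n).baseChange ℂ).map (sigmaC V))
        ⊔ (W (n - 1)).baseChange ℂ
      = (W n).baseChange ℂ)

/-- The Deligne splitting conditions for a bigrading `I^{p,q}` of `V_ℂ` attached to a mixed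
Hodge structure `(W, F)`: (i) `V_ℂ = ⊕ I^{p,q}`; (ii) `(W_n)_ℂ = ⊕_{p+q≤n} I^{p,q}`;
(iii) `F^p = ⊕_{r≥p} I^{r,s}`; (iv) `I^{p,q} ≡ σ(I^{q,p})` modulo `⊕_{r<p,s<q} I^{r,s}`,
i.e. their images in the quotient of `V_ℂ` by `⊕_{r<p,s<q} I^{r,s}` coincide. -/
def IsDeligneSplitting (V : Type*) [AddCommGroup V] [Module ℝ V]
    (W : ℤ → Submodule ℝ V) (F : ℤ → Submodule ℂ (ℂ ⊗[ℝ] V))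
    (I : ℤ × ℤ → Submodule ℂ (ℂ ⊗[ℝ] V)) : Prop :=
  DirectSum.IsInternal I ∧
  (∀ n : ℤ, (W n).baseChange ℂ = ⨆ (pq : ℤ × ℤ) (_ : pq.1 + pq.2 ≤ n), I pq) ∧
  (∀ p : ℤ, F p = ⨆ (pq : ℤ × ℤ) (_ : p ≤ pq.1), I pq) ∧
  (∀ p q : ℤ,
    (I (p, q)).map (⨆ (pq : ℤ × ℤ) (_ : pq.1 < p ∧ pq.2 < q), I pq).mkQ =
      ((I (q, p)).map (sigmaC V)).map
        (⨆ (pq : ℤ × ℤ) (_ : pq.1 < p ∧ pq.2 < q), I pq).mkQ)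

theorem forall_of_forall_le_of_sub_one {P : ℤ → Prop} (a : ℤ) (base : ∀ n ≤ a, P n)
    (step : ∀ n, P (n - 1) → P n) : ∀ n, P n := by
  have up : ∀ n, a ≤ n → P n := fun n hn => by
    induction n, hn using Int.leInduction with
    | base => exact base a le_rfl
    | succ n _ ih => exact step (n + 1) (by rwa [add_sub_cancel_right])
  exact fun n => (le_total n a).elim (base n) (up n)

theorem iSupIndep_of_disjoint_iSup_lt {α ι κ : Type*} [CompleteLattice α] [IsModularLattice α]
    [IsCompactlyGenerated α] [LinearOrder κ] {t : ι → α} {f : ι → κ} (hf : f.Injective)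
    (h : ∀ i, Disjoint (t i) (⨆ (j) (_ : f j < f i), t j)) : iSupIndep t := by
  classical
  refine iSupIndep_iff_supIndep.2 fun s => ?_
  induction s using Finset.induction_on_max_value f with
  | empty => exact Finset.supIndep_empty t
  | insert i s his hmax ih =>
    refine ih.insert ((h i).mono_right (Finset.sup_le fun j hj => le_iSup₂_of_le j ?_ le_rfl))
    exact (hmax j hj).lt_of_ne (hf.ne (ne_of_mem_of_not_mem hj his))

namespace DeligneSplitting

variable {α : Type*} [CompleteLattice α]

section Definitions

variable (W : ℤ → α)

/-- The preimage in `W n` of the image of `x ⊓ W n` in `Gr^W_n = W n / W (n - 1)`. -/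
def induced (n : ℤ) (x : α) : α := x ⊓ W n ⊔ W (n - 1)

def tailSum (G : ℤ → α) (q n : ℤ) : α := ⨆ (j : ℤ) (_ : 2 ≤ j), G (q - j + 1) ⊓ W (n - j)

def conjPart (G : ℤ → α) (q n : ℤ) : α := G q ⊓ W n ⊔ tailSum W G q n

/-- Deligne's `I^{p,q} = F^p ∩ W_{p+q} ∩ (Ḡ^q ∩ W_{p+q} + ∑_{j ≥ 2} Ḡ^{q-j+1} ∩ W_{p+q-j})`. -/
def deligneI (F G : ℤ → α) (pq : ℤ × ℤ) : α :=
  F pq.1 ⊓ W (pq.1 + pq.2) ⊓ conjPart W G pq.2 (pq.1 + pq.2)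

end Definitions

def lowerSum (I : ℤ × ℤ → α) (p q : ℤ) : α := ⨆ (rs : ℤ × ℤ) (_ : rs.1 < p ∧ rs.2 < q), I rs

/-- `F` and `G` induce opposed filtrations of weight `n` on every `Gr^W_n`; for a mixed Hodge
structure, `G = σ F`. -/
structure IsOpposedOnGr (W F G : ℤ → α) : Prop where
  monotone_W : Monotone W
  antitone_F : Antitone F
  antitone_G : Antitone G
  exists_W_eq_bot : ∃ a, ∀ n ≤ a, W n = ⊥
  exists_F_eq_bot : ∃ c, ∀ p ≥ c, F p = ⊥
  exists_G_eq_bot : ∃ c, ∀ q ≥ c, G q = ⊥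
  induced_inf_induced : ∀ n p, induced W n (F p) ⊓ induced W n (G (n - p + 1)) = W (n - 1)
  induced_sup_induced : ∀ n p, induced W n (F p) ⊔ induced W n (G (n - p + 1)) = W n

variable {W F G : ℤ → α}

theorem deligneI_le_F (pq : ℤ × ℤ) : deligneI W F G pq ≤ F pq.1 := inf_le_left.trans inf_le_left

theorem deligneI_le_W (pq : ℤ × ℤ) : deligneI W F G pq ≤ W (pq.1 + pq.2) :=
  inf_le_left.trans inf_le_right

theorem deligneI_le_conjPart (pq : ℤ × ℤ) :
    deligneI W F G pq ≤ conjPart W G pq.2 (pq.1 + pq.2) := inf_le_right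

section Monotone

variable (hW : Monotone W)
include hW

theorem induced_le (n : ℤ) (x : α) : induced W n x ≤ W n :=
  sup_le inf_le_right (hW (by omega))

theorem tailSum_le (q n : ℤ) : tailSum W G q n ≤ W (n - 2) :=
  iSup₂_le fun _ hj => inf_le_right.trans (hW (by omega))

theorem conjPart_le_induced (q n : ℤ) : conjPart W G q n ≤ induced W n (G q) :=
  sup_le_sup_left ((tailSum_le hW q n).trans (hW (by omega))) _

variable (hG : Antitone G)
include hG

theorem inf_le_conjPart {q n q' n' : ℤ} (hn : n' < n) (hq : q - (n - n') + 1 ≤ q') :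
    G q' ⊓ W n' ≤ conjPart W G q n := by
  obtain hj | hj := (show 1 ≤ n - n' by omega).eq_or_lt
  · exact le_sup_of_le_left (inf_le_inf (hG (by omega)) (hW (by omega)))
  · exact le_sup_of_le_right
      (le_iSup₂_of_le (n - n') (by omega) (inf_le_inf (hG (by omega)) (hW (by omega))))

theorem conjPart_le_tailSum {s m q n : ℤ} (hs : s < q) (hm : m - s < n - q) :
    conjPart W G s m ≤ tailSum W G q n := by
  refine sup_le (le_iSup₂_of_le (n - m) (by omega) ?_) (iSup₂_le fun j hj => ?_)
  · exact inf_le_inf (hG (by omega)) (hW (by omega))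
  · exact le_iSup₂_of_le (n - m + j) (by omega) (inf_le_inf (hG (by omega)) (hW (by omega)))

theorem tailSum_le_conjPart_sub_one (q n : ℤ) :
    tailSum W G q n ≤ conjPart W G (q - 1) (n - 1) :=
  iSup₂_le fun j hj => inf_le_conjPart hW hG (by omega) (by omega)

variable [IsModularLattice α]

theorem conjPart_inf_W_le_induced {k : ℤ} (hk : 1 ≤ k) (q n : ℤ) :
    conjPart W G q n ⊓ W (n - k) ≤ induced W (n - k) (G (q - k + 1)) := by
  have hsplit : conjPart W G q n ≤ W (n - k - 1) ⊔ G (q - k + 1) ⊓ W n := by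
    refine sup_le (le_sup_of_le_right (inf_le_inf_right _ (hG (by omega))))
      (iSup₂_le fun j hj => ?_)
    obtain hjk | hjk := le_or_gt j k
    · exact le_sup_of_le_right (inf_le_inf (hG (by omega)) (hW (by omega)))
    · exact le_sup_of_le_left (inf_le_right.trans (hW (by omega)))
  calc conjPart W G q n ⊓ W (n - k) ≤ (W (n - k - 1) ⊔ G (q - k + 1) ⊓ W n) ⊓ W (n - k) :=
        inf_le_inf_right _ hsplit
    _ = W (n - k - 1) ⊔ G (q - k + 1) ⊓ W n ⊓ W (n - k) := sup_inf_assoc_of_le _ (hW (by omega))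
    _ ≤ induced W (n - k) (G (q - k + 1)) := by
        rw [sup_comm, inf_assoc, inf_eq_right.2 (hW (by omega : n - k ≤ n))]
        exact le_rfl

theorem conjPart_inf_W_le_conjPart_sub_one (q n : ℤ) :
    conjPart W G q n ⊓ W (n - 1) ≤ conjPart W G (q - 1) (n - 1) := by
  rw [conjPart, sup_comm, sup_inf_assoc_of_le _ ((tailSum_le hW q n).trans (hW (by omega)))]
  exact sup_le (tailSum_le_conjPart_sub_one hW hG q n)
    (le_sup_of_le_left (inf_le_inf (inf_le_left.trans (hG (by omega))) le_rfl))

end Monotone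

namespace IsOpposedOnGr

theorem symm (h : IsOpposedOnGr W F G) : IsOpposedOnGr W G F where
  monotone_W := h.monotone_W
  antitone_F := h.antitone_G
  antitone_G := h.antitone_F
  exists_W_eq_bot := h.exists_W_eq_bot
  exists_F_eq_bot := h.exists_G_eq_bot
  exists_G_eq_bot := h.exists_F_eq_bot
  induced_inf_induced n p := by
    simpa [inf_comm, show n - (n - p + 1) + 1 = p by omega]
      using h.induced_inf_induced n (n - p + 1)
  induced_sup_induced n p := by
    simpa [sup_comm, show n - (n - p + 1) + 1 = p by omega]
      using h.induced_sup_induced n (n - p + 1)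

variable (h : IsOpposedOnGr W F G)
include h

theorem induced_G_eq_of_F_eq_bot {n q : ℤ} (hF : F (n - q + 1) = ⊥) :
    induced W n (G q) = W n := by
  have := h.induced_sup_induced n (n - q + 1)
  rwa [hF, show n - (n - q + 1) + 1 = q by omega, induced, bot_inf_eq, bot_sup_eq,
    sup_eq_right.2 (show W (n - 1) ≤ induced W n (G q) from le_sup_right)] at this

theorem deligneI_le_conjPart_inf_conjPart {p q r s : ℤ} (hr : r < p) (hs : s < q) :
    deligneI W F G (r, s) ≤ conjPart W F p (p + q) ⊓ conjPart W G q (p + q) :=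
  le_inf ((le_inf (deligneI_le_F _) (deligneI_le_W _)).trans
      (inf_le_conjPart h.monotone_W h.antitone_F (by omega) (by omega)))
    ((deligneI_le_conjPart _).trans ((conjPart_le_tailSum h.monotone_W h.antitone_G hs
      (by omega)).trans le_sup_right))

variable [IsModularLattice α]

theorem induced_inf_induced_eq_succ_sup {n r s : ℤ} (hrs : r + s ≤ n) :
    induced W n (F r) ⊓ induced W n (G s) =
      induced W n (F (r + 1)) ⊓ induced W n (G s) ⊔
        induced W n (F r) ⊓ induced W n (G (n - r)) := by
  have hF : induced W n (F (r + 1)) ≤ induced W n (F r) :=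
    sup_le_sup_right (inf_le_inf_right _ (h.antitone_F (by omega))) _
  have hG : induced W n (G (n - r)) ≤ induced W n (G s) :=
    sup_le_sup_right (inf_le_inf_right _ (h.antitone_G (by omega))) _
  have hsup := h.induced_sup_induced n (r + 1)
  rw [show n - (r + 1) + 1 = n - r by omega] at hsup
  calc induced W n (F r) ⊓ induced W n (G s)
      = (induced W n (F r) ⊓ induced W n (G (n - r)) ⊔ induced W n (F (r + 1))) ⊓
          induced W n (G s) := by
        rw [inf_sup_assoc_of_le _ hF, sup_comm _ (induced W n (F (r + 1))), hsup,
          inf_eq_left.2 (induced_le h.monotone_W n _)]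
    _ = _ := by rw [sup_inf_assoc_of_le _ (inf_le_right.trans hG), sup_comm]

theorem induced_inf_induced_le (p q : ℤ) :
    induced W (p + q) (F p) ⊓ induced W (p + q) (G q) ≤
      deligneI W F G (p, q) ⊔ W (p + q - 1) := by
  obtain ⟨a, ha⟩ := h.exists_W_eq_bot
  have hW := h.monotone_W
  -- Opposedness on `Gr^W_m` pushes the error term of an element of `Q m` from `W_m` into
  -- `W_{m-1}`, at the cost of an element of `F^p ∩ W_m`.
  let Q : ℤ → α := fun m => F p ⊓ W (p + q) ⊓ (conjPart W G q (p + q) ⊔ W m)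
  have step : ∀ m ≤ p + q - 1, Q m ≤ Q (m - 1) ⊔ W (p + q - 1) := by
    intro m hm
    have hWm : W m ≤ conjPart W G q (p + q) ⊔ W (m - 1) ⊔ F p ⊓ W m := by
      refine (h.induced_sup_induced m p).ge.trans (sup_le
        (sup_le le_sup_right (le_sup_of_le_left le_sup_right))
        (sup_le (le_sup_of_le_left (le_sup_of_le_left ?_)) (le_sup_of_le_left le_sup_right)))
      exact inf_le_conjPart hW h.antitone_G (by omega) (by omega)
    calc Q m ≤ F p ⊓ W (p + q) ⊓ (conjPart W G q (p + q) ⊔ W (m - 1) ⊔ F p ⊓ W m) :=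
          inf_le_inf_left _ (sup_le (le_sup_of_le_left le_sup_left) hWm)
      _ = Q (m - 1) ⊔ F p ⊓ W m := (inf_sup_assoc_of_le _ (inf_le_inf_left _ (hW (by omega)))).symm
      _ ≤ Q (m - 1) ⊔ W (p + q - 1) := sup_le_sup_left (inf_le_right.trans (hW hm)) _
  have hQ : ∀ m, m ≤ p + q - 1 → Q m ≤ deligneI W F G (p, q) ⊔ W (p + q - 1) :=
    forall_of_forall_le_of_sub_one a
      (fun m hm _ => le_sup_of_le_left (by simp only [Q, ha m hm, sup_bot_eq]; rfl))
      (fun m ih hm => (step m hm).trans (sup_le (ih (by omega)) le_sup_right))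
  calc induced W (p + q) (F p) ⊓ induced W (p + q) (G q)
      = W (p + q - 1) ⊔ F p ⊓ W (p + q) ⊓ induced W (p + q) (G q) := by
        rw [induced, sup_comm, sup_inf_assoc_of_le _
          (show W (p + q - 1) ≤ induced W (p + q) (G q) from le_sup_right)]
    _ ≤ W (p + q - 1) ⊔ Q (p + q - 1) :=
        sup_le_sup_left (inf_le_inf_left _ (sup_le_sup_right le_sup_left _)) _
    _ ≤ deligneI W F G (p, q) ⊔ W (p + q - 1) := sup_le le_sup_right (hQ _ le_rfl)

theorem induced_inf_induced_le_iSup {m r s : ℤ} (hrs : r + s ≤ m) :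
    induced W m (F r) ⊓ induced W m (G s) ≤
      (⨆ (pq : ℤ × ℤ) (_ : r ≤ pq.1 ∧ s ≤ pq.2 ∧ pq.1 + pq.2 = m), deligneI W F G pq) ⊔
        W (m - 1) := by
  have hI : ∀ p, induced W m (F p) ⊓ induced W m (G (m - p)) ≤
      deligneI W F G (p, m - p) ⊔ W (m - 1) := fun p => by
    simpa using h.induced_inf_induced_le p (m - p)
  induction r, (show r ≤ m - s by omega) using Int.leInductionDown with
  | base =>
    refine (sub_sub_cancel m s ▸ hI (m - s)).trans (sup_le_sup_right ?_ _)
    exact le_iSup₂_of_le (m - s, s) ⟨le_rfl, le_rfl, by simp⟩ le_rfl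
  | pred r hr ih =>
    rw [h.induced_inf_induced_eq_succ_sup (show r - 1 + s ≤ m by omega), sub_add_cancel]
    refine sup_le ((ih (by omega)).trans (sup_le_sup_right ?_ _))
      ((hI (r - 1)).trans (sup_le_sup_right ?_ _))
    · exact iSup₂_le fun pq hpq => le_iSup₂_of_le pq ⟨by omega, hpq.2⟩ le_rfl
    · exact le_iSup₂_of_le (r - 1, m - (r - 1)) ⟨le_rfl, by simp; omega, by simp⟩ le_rfl

theorem deligneI_inf_W_le (p q : ℤ) :
    deligneI W F G (p, q) ⊓ W (p + q - 1) ≤ deligneI W F G (p, q - 1) ⊓ W (p + (q - 1) - 1) := by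
  have hW := h.monotone_W
  have hI : deligneI W F G (p, q) ⊓ W (p + q - 1) ≤
      F p ⊓ W (p + q - 1) ⊓ (conjPart W G q (p + q) ⊓ W (p + q - 1)) :=
    le_inf (le_inf (inf_le_left.trans (deligneI_le_F _)) inf_le_right)
      (inf_le_inf_right _ (deligneI_le_conjPart _))
  have hK := conjPart_inf_W_le_induced hW h.antitone_G le_rfl q (p + q)
  have hD := h.induced_inf_induced (p + q - 1) p
  simp only [sub_add_cancel, show p + q - 1 - p + 1 = q by omega] at hK hD
  refine le_inf (hI.trans ?_) (hI.trans ?_)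
  · simp only [deligneI, show p + (q - 1) = p + q - 1 by omega]
    exact inf_le_inf_left _ (conjPart_inf_W_le_conjPart_sub_one hW h.antitone_G q (p + q))
  · rw [show p + (q - 1) - 1 = p + q - 1 - 1 by omega, ← hD]
    exact inf_le_inf le_sup_left hK

theorem deligneI_inf_W_eq_bot (p q : ℤ) : deligneI W F G (p, q) ⊓ W (p + q - 1) = ⊥ := by
  obtain ⟨a, ha⟩ := h.exists_W_eq_bot
  refine forall_of_forall_le_of_sub_one (P := fun q => deligneI W F G (p, q) ⊓ W (p + q - 1) = ⊥)
    (a - p + 1) (fun q hq => ?_)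
    (fun q ih => le_bot_iff.1 ((h.deligneI_inf_W_le p q).trans ih.le)) q
  rw [ha _ (by omega), inf_bot_eq]

theorem disjoint_deligneI_induced (p q : ℤ) :
    Disjoint (deligneI W F G (p, q)) (induced W (p + q) (F (p + 1))) := by
  have hD := h.induced_inf_induced (p + q) (p + 1)
  rw [show p + q - (p + 1) + 1 = q by omega] at hD
  have hG : deligneI W F G (p, q) ≤ induced W (p + q) (G q) :=
    (deligneI_le_conjPart _).trans (conjPart_le_induced h.monotone_W _ _)
  rw [disjoint_iff, ← h.deligneI_inf_W_eq_bot p q]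
  refine le_antisymm (le_inf inf_le_left ?_) (inf_le_inf_left _ le_sup_right)
  rw [← hD]
  exact le_inf inf_le_right (inf_le_left.trans hG)

/-- Order the pieces by weight, then by decreasing `p`: everything before `(p, q)` lies in
`F^{p+1} ⊓ W_{p+q} + W_{p+q-1}`. -/
theorem iSupIndep_deligneI [IsCompactlyGenerated α] : iSupIndep (deligneI W F G) := by
  refine iSupIndep_of_disjoint_iSup_lt (f := fun pq : ℤ × ℤ => toLex (pq.1 + pq.2, -pq.1))
    (fun a b hab => by simp at hab; ext <;> omega) fun ⟨p, q⟩ =>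
      (h.disjoint_deligneI_induced p q).mono_right (iSup₂_le fun ⟨r, s⟩ hrs => ?_)
  rcases Prod.Lex.toLex_lt_toLex.1 hrs with hlt | ⟨heq, hlt⟩
  · exact (deligneI_le_W _).trans ((h.monotone_W (by simp at hlt ⊢; omega)).trans le_sup_right)
  · simp only at heq hlt
    exact le_sup_of_le_left (le_inf ((deligneI_le_F _).trans (h.antitone_F (by omega)))
      ((deligneI_le_W _).trans (h.monotone_W heq.le)))

theorem F_inf_W_le_iSup (p n : ℤ) :
    F p ⊓ W n ≤ ⨆ (pq : ℤ × ℤ) (_ : p ≤ pq.1 ∧ pq.1 + pq.2 ≤ n), deligneI W F G pq := by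
  obtain ⟨a, ha⟩ := h.exists_W_eq_bot
  obtain ⟨c, hc⟩ := h.exists_F_eq_bot
  refine forall_of_forall_le_of_sub_one (P := fun n => F p ⊓ W n ≤
    ⨆ (pq : ℤ × ℤ) (_ : p ≤ pq.1 ∧ pq.1 + pq.2 ≤ n), deligneI W F G pq) a
    (fun n hn => by rw [ha n hn, inf_bot_eq]; exact bot_le) (fun n ih => ?_) n
  have hG : induced W n (G (min (n - p) (n - c + 1))) = W n :=
    h.induced_G_eq_of_F_eq_bot (hc _ (by omega))
  have hsplit := h.induced_inf_induced_le_iSup (show p + min (n - p) (n - c + 1) ≤ n by omega)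
  set Y := ⨆ (pq : ℤ × ℤ) (_ : p ≤ pq.1 ∧ min (n - p) (n - c + 1) ≤ pq.2 ∧ pq.1 + pq.2 = n),
    deligneI W F G pq
  have hY : Y ≤ F p ⊓ W n := iSup₂_le fun pq hpq => le_inf
    ((deligneI_le_F _).trans (h.antitone_F hpq.1))
    ((deligneI_le_W _).trans (h.monotone_W hpq.2.2.le))
  calc F p ⊓ W n ≤ (Y ⊔ W (n - 1)) ⊓ (F p ⊓ W n) :=
        le_inf ((le_inf le_sup_left (hG ▸ inf_le_right)).trans hsplit) le_rfl
    _ = Y ⊔ W (n - 1) ⊓ (F p ⊓ W n) := sup_inf_assoc_of_le _ hY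
    _ ≤ _ := by
      refine sup_le (iSup₂_le fun pq hpq => le_iSup₂_of_le pq ⟨hpq.1, hpq.2.2.le⟩ le_rfl) ?_
      refine (le_inf (inf_le_right.trans inf_le_left) inf_le_left).trans (ih.trans ?_)
      exact iSup₂_le fun pq hpq => le_iSup₂_of_le pq ⟨hpq.1, by omega⟩ le_rfl

theorem W_eq_iSup (n : ℤ) : W n = ⨆ (pq : ℤ × ℤ) (_ : pq.1 + pq.2 ≤ n), deligneI W F G pq := by
  refine le_antisymm ?_ (iSup₂_le fun pq hpq => (deligneI_le_W pq).trans (h.monotone_W hpq))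
  obtain ⟨a, ha⟩ := h.exists_W_eq_bot
  obtain ⟨c, hc⟩ := h.exists_G_eq_bot
  refine forall_of_forall_le_of_sub_one
    (P := fun n => W n ≤ ⨆ (pq : ℤ × ℤ) (_ : pq.1 + pq.2 ≤ n), deligneI W F G pq) a
    (fun n hn => by rw [ha n hn]; exact bot_le) (fun n ih => ?_) n
  rw [← h.symm.induced_G_eq_of_F_eq_bot (hc (n - (n - c + 1) + 1) (by omega))]
  refine sup_le ((h.F_inf_W_le_iSup _ n).trans ?_) (ih.trans ?_)
  · exact iSup₂_le fun pq hpq => le_iSup₂_of_le pq hpq.2 le_rfl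
  · exact iSup₂_le fun pq hpq => le_iSup₂_of_le pq (by omega) le_rfl

theorem iSup_deligneI_eq_top {b : ℤ} (hb : W b = ⊤) : ⨆ pq, deligneI W F G pq = ⊤ :=
  eq_top_iff.2 (hb ▸ (h.W_eq_iSup b).le.trans (iSup₂_le fun pq _ => le_iSup _ pq))

theorem F_eq_iSup {b : ℤ} (hb : W b = ⊤) (p : ℤ) :
    F p = ⨆ (pq : ℤ × ℤ) (_ : p ≤ pq.1), deligneI W F G pq := by
  refine le_antisymm ?_ (iSup₂_le fun pq hpq => (deligneI_le_F pq).trans (h.antitone_F hpq))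
  calc F p = F p ⊓ W b := by rw [hb, inf_top_eq]
    _ ≤ _ := (h.F_inf_W_le_iSup p b).trans (iSup₂_le fun pq hpq => le_iSup₂_of_le pq hpq.1 le_rfl)

theorem conjPart_inf_conjPart_inf_W_le {p q m : ℤ} (hm : m ≤ p + q - 1) :
    conjPart W F p (p + q) ⊓ conjPart W G q (p + q) ⊓ W m ≤
      lowerSum (deligneI W F G) p q ⊔
        conjPart W F p (p + q) ⊓ conjPart W G q (p + q) ⊓ W (m - 1) := by
  set M := conjPart W F p (p + q) ⊓ conjPart W G q (p + q)
  have hk : 1 ≤ p + q - m := by omega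
  have hFm := conjPart_inf_W_le_induced h.monotone_W h.antitone_F hk p (p + q)
  have hGm := conjPart_inf_W_le_induced h.monotone_W h.antitone_G hk q (p + q)
  rw [show p + q - (p + q - m) = m by omega, show p - (p + q - m) + 1 = m - q + 1 by omega] at hFm
  rw [show p + q - (p + q - m) = m by omega, show q - (p + q - m) + 1 = m - p + 1 by omega] at hGm
  have hM : M ⊓ W m ≤ induced W m (F (m - q + 1)) ⊓ induced W m (G (m - p + 1)) :=
    le_inf ((inf_le_inf_right _ inf_le_left).trans hFm)
      ((inf_le_inf_right _ inf_le_right).trans hGm)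
  obtain rfl | hm := hm.eq_or_lt
  · have hD := h.induced_inf_induced (p + q - 1) p
    rw [show p + q - 1 - p + 1 = q by omega] at hD
    rw [show p + q - 1 - q + 1 = p by omega, show p + q - 1 - p + 1 = q by omega, hD] at hM
    exact le_sup_of_le_right (le_inf inf_le_left hM)
  · have hsplit := h.induced_inf_induced_le_iSup (show m - q + 1 + (m - p + 1) ≤ m by omega)
    set Y := ⨆ (pq : ℤ × ℤ) (_ : m - q + 1 ≤ pq.1 ∧ m - p + 1 ≤ pq.2 ∧ pq.1 + pq.2 = m),
      deligneI W F G pq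
    have hYL : Y ≤ lowerSum (deligneI W F G) p q :=
      iSup₂_le fun pq hpq => le_iSup₂_of_le pq ⟨by omega, by omega⟩ le_rfl
    have hYM : Y ≤ M ⊓ W m := le_inf (hYL.trans (iSup₂_le fun rs hrs =>
        h.deligneI_le_conjPart_inf_conjPart hrs.1 hrs.2))
      (iSup₂_le fun pq hpq => (deligneI_le_W pq).trans (h.monotone_W hpq.2.2.le))
    calc M ⊓ W m ≤ (Y ⊔ W (m - 1)) ⊓ (M ⊓ W m) := le_inf (hM.trans hsplit) le_rfl
      _ = Y ⊔ W (m - 1) ⊓ (M ⊓ W m) := sup_inf_assoc_of_le _ hYM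
      _ ≤ _ := sup_le_sup hYL (by rw [inf_comm, inf_assoc]; exact inf_le_inf_left _ inf_le_right)

/-- Both sides lie in `M = conjPart F ⊓ conjPart G` and agree modulo `W_{p+q-1}`, and
`M ⊓ W_{p+q-1}` lies in the lower sum. -/
theorem deligneI_symm_le (p q : ℤ) :
    deligneI W G F (q, p) ≤ deligneI W F G (p, q) ⊔ lowerSum (deligneI W F G) p q := by
  obtain ⟨a, ha⟩ := h.exists_W_eq_bot
  set M := conjPart W F p (p + q) ⊓ conjPart W G q (p + q)
  have hlow : ∀ m, m ≤ p + q - 1 → M ⊓ W m ≤ lowerSum (deligneI W F G) p q :=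
    forall_of_forall_le_of_sub_one a (fun m hm _ => by rw [ha m hm, inf_bot_eq]; exact bot_le)
      fun m ih hm => (h.conjPart_inf_conjPart_inf_W_le hm).trans (sup_le le_rfl (ih (by omega)))
  have hI : deligneI W F G (p, q) ≤ M :=
    le_inf ((le_inf (deligneI_le_F _) (deligneI_le_W _)).trans le_sup_left) (deligneI_le_conjPart _)
  have hX : deligneI W G F (q, p) = G q ⊓ W (p + q) ⊓ conjPart W F p (p + q) := by
    rw [deligneI, add_comm]
  calc deligneI W G F (q, p)
      ≤ (deligneI W F G (p, q) ⊔ W (p + q - 1)) ⊓ M := by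
        rw [hX]
        refine le_inf ((le_inf (inf_le_right.trans (conjPart_le_induced h.monotone_W _ _))
          (inf_le_left.trans le_sup_left)).trans (h.induced_inf_induced_le p q)) ?_
        exact le_inf inf_le_right (inf_le_left.trans le_sup_left)
    _ = deligneI W F G (p, q) ⊔ W (p + q - 1) ⊓ M := sup_inf_assoc_of_le _ hI
    _ ≤ _ := sup_le_sup_left ((inf_comm _ _).le.trans (hlow _ le_rfl)) _

theorem lowerSum_symm_le (p q : ℤ) :
    lowerSum (deligneI W G F) q p ≤ lowerSum (deligneI W F G) p q :=
  iSup₂_le fun rs hrs => (h.deligneI_symm_le rs.2 rs.1).trans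
    (sup_le (le_iSup₂_of_le (rs.2, rs.1) ⟨hrs.2, hrs.1⟩ le_rfl)
      (iSup₂_le fun uv huv => le_iSup₂_of_le uv ⟨by omega, by omega⟩ le_rfl))

theorem lowerSum_sup_deligneI (p q : ℤ) :
    lowerSum (deligneI W F G) p q ⊔ deligneI W F G (p, q) =
      lowerSum (deligneI W F G) p q ⊔ deligneI W G F (q, p) :=
  le_antisymm
    (sup_le le_sup_left ((h.symm.deligneI_symm_le q p).trans
      (sup_le le_sup_right ((h.lowerSum_symm_le p q).trans le_sup_left))))
    (sup_le le_sup_left ((h.deligneI_symm_le p q).trans (sup_comm _ _).le))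

theorem eq_deligneI [IsCompactlyGenerated α] (e : α ≃o α) (heW : ∀ n, e (W n) = W n)
    (heF : ∀ p, e (F p) = G p) {J : ℤ × ℤ → α} (hJ : iSup J = ⊤)
    (hJW : ∀ n, W n = ⨆ (pq : ℤ × ℤ) (_ : pq.1 + pq.2 ≤ n), J pq)
    (hJF : ∀ p, F p = ⨆ (pq : ℤ × ℤ) (_ : p ≤ pq.1), J pq)
    (hJe : ∀ p q, lowerSum J p q ⊔ J (p, q) = lowerSum J p q ⊔ e (J (q, p))) :
    J = deligneI W F G := by
  refine (h.iSupIndep_deligneI.le_iff_eq_of_iSup_eq_top hJ).1 ?_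
  obtain ⟨a, ha⟩ := h.exists_W_eq_bot
  have hJW' (pq : ℤ × ℤ) : J pq ≤ W (pq.1 + pq.2) := by
    rw [hJW]; exact le_iSup₂_of_le pq le_rfl le_rfl
  have hJF' (pq : ℤ × ℤ) : J pq ≤ F pq.1 := by
    rw [hJF]; exact le_iSup₂_of_le pq le_rfl le_rfl
  have hK : ∀ n, ∀ pq : ℤ × ℤ, pq.1 + pq.2 ≤ n → J pq ≤ conjPart W G pq.2 (pq.1 + pq.2) := by
    refine forall_of_forall_le_of_sub_one a
      (fun n hn pq hpq => (hJW' pq).trans (by rw [ha _ (by omega)]; exact bot_le)) ?_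
    rintro n ih ⟨p, q⟩ hpq
    have hσ : e (J (q, p)) ≤ G q ⊓ W (p + q) := by
      rw [← heF, ← heW, ← e.map_inf, add_comm]
      exact e.monotone (le_inf (hJF' _) (hJW' _))
    have hL : lowerSum J p q ≤ tailSum W G q (p + q) := iSup₂_le fun rs hrs =>
      (ih rs (by simp at hpq; omega)).trans
        (conjPart_le_tailSum h.monotone_W h.antitone_G hrs.2 (by omega))
    refine le_sup_right.trans ((hJe p q).trans_le (sup_le (hL.trans le_sup_right) ?_))
    exact hσ.trans le_sup_left
  rintro ⟨p, q⟩
  exact le_inf (le_inf (hJF' _) (hJW' _)) (hK (p + q) (p, q) le_rfl)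

end IsOpposedOnGr

theorem map_deligneI {β : Type*} [CompleteLattice β] (e : α ≃o β) (W F G : ℤ → α) (pq : ℤ × ℤ) :
    e (deligneI W F G pq) = deligneI (e ∘ W) (e ∘ F) (e ∘ G) pq := by
  simp only [deligneI, conjPart, tailSum, e.map_inf, e.map_sup, e.map_iSup₂, Function.comp]

end DeligneSplitting

theorem Submodule.map_mkQ_eq_map_mkQ_iff {R M : Type*} [Ring R] [AddCommGroup M] [Module R M]
    {L A B : Submodule R M} : A.map L.mkQ = B.map L.mkQ ↔ L ⊔ A = L ⊔ B := by
  rw [← (comap_injective_of_surjective L.mkQ_surjective).eq_iff, comap_map_mkQ, comap_map_mkQ]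

open DeligneSplitting

section Complexification

variable {V : Type*} [AddCommGroup V] [Module ℝ V]

theorem sigmaC_tmul (z : ℂ) (v : V) : sigmaC V (z ⊗ₜ v) = (starRingEnd ℂ) z ⊗ₜ v := rfl

theorem sigmaC_involutive : Function.Involutive (sigmaC V) := fun x => by
  induction x using TensorProduct.induction_on with
  | zero => simp
  | tmul z v => simp [sigmaC_tmul]
  | add x y hx hy => rw [map_add, map_add, hx, hy]

variable (V) in
noncomputable def mapSigmaC : Submodule ℂ (ℂ ⊗[ℝ] V) ≃o Submodule ℂ (ℂ ⊗[ℝ] V) :=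
  Submodule.orderIsoMapComapOfBijective (sigmaC V) sigmaC_involutive.bijective

theorem mapSigmaC_apply (S : Submodule ℂ (ℂ ⊗[ℝ] V)) : mapSigmaC V S = S.map (sigmaC V) := rfl

theorem mapSigmaC_mapSigmaC (S : Submodule ℂ (ℂ ⊗[ℝ] V)) : mapSigmaC V (mapSigmaC V S) = S := by
  ext x
  simp [mapSigmaC_apply, Submodule.mem_map, sigmaC_involutive.eq_iff, sigmaC_involutive x]

theorem mapSigmaC_baseChange (p : Submodule ℝ V) :
    mapSigmaC V (p.baseChange ℂ) = p.baseChange ℂ := by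
  have hle : ∀ S : Submodule ℝ V, mapSigmaC V (S.baseChange ℂ) ≤ S.baseChange ℂ := fun S => by
    rw [Submodule.baseChange_eq_span, mapSigmaC_apply, Submodule.map_span, Submodule.span_le]
    rintro _ ⟨_, ⟨v, hv, rfl⟩, rfl⟩
    exact Submodule.subset_span ⟨v, hv, by simp [sigmaC_tmul]⟩
  refine le_antisymm (hle p) ?_
  conv_lhs => rw [← mapSigmaC_mapSigmaC (p.baseChange ℂ)]
  exact (mapSigmaC V).monotone (hle p)

theorem isOpposedOnGr_of_isMixedHodgeStructure {W : ℤ → Submodule ℝ V}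
    {F : ℤ → Submodule ℂ (ℂ ⊗[ℝ] V)} (hWF : IsMixedHodgeStructure V W F) :
    IsOpposedOnGr (fun n => (W n).baseChange ℂ) F (fun p => mapSigmaC V (F p)) := by
  obtain ⟨hW, ⟨a, ha⟩, -, hF, -, ⟨c, hc⟩, hHodge⟩ := hWF
  have hσ (q n : ℤ) : (F q ⊓ (W n).baseChange ℂ).map (sigmaC V) =
      mapSigmaC V (F q) ⊓ (W n).baseChange ℂ := by
    rw [← mapSigmaC_apply, OrderIso.map_inf, mapSigmaC_baseChange]
  have hF' : Antitone F := antitone_int_of_succ_le hF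
  refine ⟨fun m n hmn => Submodule.baseChange_mono ℂ (hW hmn), hF',
    (mapSigmaC V).monotone.comp_antitone hF', ⟨a, fun n hn => by simp [ha n hn]⟩, ⟨c, hc⟩,
    ⟨c, fun p hp => by simp [hc p hp]⟩, fun n p => ?_, fun n p => ?_⟩
  · simpa only [induced, hσ] using (hHodge n p).1
  · rw [induced, induced, sup_sup_sup_comm, sup_idem, ← hσ]
    exact (hHodge n p).2

end Complexification

theorem deligne_splitting_exists_unique_general (V : Type*) [AddCommGroup V] [Module ℝ V]
    (W : ℤ → Submodule ℝ V) (F : ℤ → Submodule ℂ (ℂ ⊗[ℝ] V))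
    (hWF : IsMixedHodgeStructure V W F) :
    ∃! I : ℤ × ℤ → Submodule ℂ (ℂ ⊗[ℝ] V), IsDeligneSplitting V W F I := by
  have h := isOpposedOnGr_of_isMixedHodgeStructure hWF
  set Wc : ℤ → Submodule ℂ (ℂ ⊗[ℝ] V) := fun n => (W n).baseChange ℂ
  set G : ℤ → Submodule ℂ (ℂ ⊗[ℝ] V) := fun p => mapSigmaC V (F p)
  obtain ⟨b, hb⟩ := hWF.2.2.1
  have hWb : Wc b = ⊤ := by simp only [Wc, hb b le_rfl, Submodule.baseChange_top]
  have hσ (pq : ℤ × ℤ) : (deligneI Wc F G pq).map (sigmaC V) = deligneI Wc G F pq := by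
    rw [← mapSigmaC_apply, map_deligneI]
    simp only [Function.comp_def, Wc, G, mapSigmaC_baseChange, mapSigmaC_mapSigmaC]
  refine ⟨deligneI Wc F G, ⟨?_, h.W_eq_iSup, h.F_eq_iSup hWb, fun p q => ?_⟩, fun J hJ => ?_⟩
  · exact DirectSum.isInternal_submodule_of_iSupIndep_of_iSup_eq_top h.iSupIndep_deligneI
      (h.iSup_deligneI_eq_top hWb)
  · rw [Submodule.map_mkQ_eq_map_mkQ_iff, hσ]
    exact h.lowerSum_sup_deligneI p q
  · obtain ⟨hJ, hJW, hJF, hJσ⟩ := hJ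
    exact h.eq_deligneI (mapSigmaC V) (fun n => mapSigmaC_baseChange (W n)) (fun p => rfl)
      hJ.submodule_iSup_eq_top hJW hJF fun p q => Submodule.map_mkQ_eq_map_mkQ_iff.1 (hJσ p q)

/-- Deligne splitting. Every mixed Hodge structure `(W, F)` on a
finite-dimensional real vector space `V` admits a unique Deligne splitting, i.e. a unique
family of complex subspaces `I^{p,q} ⊆ V_ℂ` such that `V_ℂ = ⊕ I^{p,q}`,
`(W_n)_ℂ = ⊕_{p+q≤n} I^{p,q}`, `F^p = ⊕_{r≥p} I^{r,s}`, and
`I^{p,q} ≡ σ(I^{q,p})` modulo `⊕_{r<p,s<q} I^{r,s}`. -/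
theorem deligne_splitting_exists_unique (V : Type*) [AddCommGroup V] [Module ℝ V]
    [FiniteDimensional ℝ V]
    (W : ℤ → Submodule ℝ V) (F : ℤ → Submodule ℂ (ℂ ⊗[ℝ] V))
    (hWF : IsMixedHodgeStructure V W F) :
    ∃! I : ℤ × ℤ → Submodule ℂ (ℂ ⊗[ℝ] V), IsDeligneSplitting V W F I :=
  deligne_splitting_exists_unique_general V W F hWF
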